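/- Let R be a commutative ring and r ≥ 3 an integer. Then the coefficient of the monomial ∏_{i=1}^{r−1} t_i^{r−1} in (∏_{i=1}^{r−1} t_i^{i}) · ∏_{1≤i<j≤r−1}(t_i − t_j), taken in R[t_1,…,t_{r−1}], equals the coefficient of the monomial ∏_{i=1}^{r−2} t_i^{r−2} in (∏_{i=1}^{r−2} t_i^{i}) · ∏_{1≤i<j≤r−2}(t_i − t_j), taken in R[t_1,…,t_{r−2}]. -/

import Mathlib

/-!
Both coefficients equal `1`. Writing `n` for the number of variables, the staircase monomial
`∏ tᵢ^(i+1)` (0-indexed) divides the target monomial `∏ tᵢ^n` with quotient `∏ tᵢ^(n-1-i)`.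
Up to reversing the variables, `∏_{i<j} (tᵢ - tⱼ)` is a Vandermonde determinant; in its Leibniz
expansion the term of a permutation `σ` is `± ∏ tₖ^(σ⁻¹(n-1-k))`, so only `σ = 1` contributes
to the coefficient of `∏ tᵢ^(n-1-i)`, and it contributes `1`.
-/

open Finset MvPolynomial

theorem Matrix.det_vandermonde_comp_rev {R : Type*} [CommRing R] {n : ℕ} (v : Fin n → R) :
    (vandermonde (v ∘ Fin.rev)).det = ∏ i : Fin n, ∏ j ∈ Ioi i, (v i - v j) := by
  rw [det_vandermonde]
  calc ∏ i, ∏ j ∈ Ioi i, (v (Fin.rev j) - v (Fin.rev i))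
      = ∏ i, ∏ j ∈ Iio (Fin.rev i), (v j - v (Fin.rev i)) := by
        refine prod_congr rfl fun i _ => ?_
        rw [← Fin.finsetImage_rev_Ioi, prod_image Fin.rev_injective.injOn]
    _ = ∏ i, ∏ j ∈ Iio i, (v j - v i) := Fintype.prod_equiv Fin.revPerm _ _ fun _ => rfl
    _ = ∏ j, ∏ i ∈ Ioi j, (v j - v i) := prod_comm' (by simp)

namespace MvPolynomial

theorem prod_X_pow_eq_monomial_equivFunOnFinite {R σ : Type*} [CommSemiring R] [Fintype σ]
    (e : σ → ℕ) :
    ∏ i, (X i : MvPolynomial σ R) ^ e i = monomial (Finsupp.equivFunOnFinite.symm e) 1 := by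
  rw [monomial_eq, C_1, one_mul, Finsupp.prod_fintype _ _ fun _ => pow_zero _]
  rfl

theorem coeff_equivFunOnFinite_prod_X_pow {R σ : Type*} [CommSemiring R] [Fintype σ]
    [DecidableEq σ] (d e : σ → ℕ) :
    coeff (Finsupp.equivFunOnFinite.symm d) (∏ i, (X i : MvPolynomial σ R) ^ e i) =
      if e = d then 1 else 0 := by
  simp only [prod_X_pow_eq_monomial_equivFunOnFinite, coeff_monomial, Equiv.apply_eq_iff_eq]

variable {R : Type*} [CommRing R]

theorem prod_vandermonde_X_rev_perm {n : ℕ} (σ : Equiv.Perm (Fin n)) :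
    ∏ i, Matrix.vandermonde ((X : Fin n → MvPolynomial (Fin n) R) ∘ Fin.rev) (σ i) i =
      ∏ k, X k ^ (σ⁻¹ (Fin.rev k) : ℕ) :=
  Fintype.prod_equiv (σ.trans Fin.revPerm) _ _ fun i => by simp [Matrix.vandermonde_apply]

theorem coeff_rev_prod_sub_X (n : ℕ) :
    coeff (Finsupp.equivFunOnFinite.symm fun k => (Fin.rev k : ℕ))
      (∏ i : Fin n, ∏ j ∈ Ioi i, (X i - X j) : MvPolynomial (Fin n) R) = 1 := by
  have hperm (σ : Equiv.Perm (Fin n)) :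
      (fun k => (σ⁻¹ (Fin.rev k) : ℕ)) = (fun k => (Fin.rev k : ℕ)) ↔ σ = 1 := by
    refine ⟨fun h => inv_eq_one.mp <| Equiv.ext fun j => Fin.ext ?_, fun h => h ▸ rfl⟩
    simpa using congr_fun h (Fin.rev j)
  rw [← Matrix.det_vandermonde_comp_rev, Matrix.det_apply, coeff_sum]
  simp_rw [coeff_smul, prod_vandermonde_X_rev_perm, coeff_equivFunOnFinite_prod_X_pow, hperm]
  simp

theorem coeff_staircase_mul_prod_sub_X (n : ℕ) :
    coeff (Finsupp.equivFunOnFinite.symm fun _ => n)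
      ((∏ i : Fin n, X i ^ ((i : ℕ) + 1)) * ∏ i : Fin n, ∏ j ∈ Ioi i, (X i - X j) :
        MvPolynomial (Fin n) R) = 1 := by
  rw [prod_X_pow_eq_monomial_equivFunOnFinite, coeff_monomial_mul',
    if_pos (Finsupp.le_def.2 fun k => k.isLt), one_mul, ← coeff_rev_prod_sub_X n]
  congr
  ext k
  simp [Fin.val_rev]

end MvPolynomial

theorem stmt_11_general {R : Type*} [CommRing R] (r : ℕ) :
    (MvPolynomial.coeff
      (Finsupp.equivFunOnFinite.symm fun _ : Fin (r - 1) => r - 1)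
      ((∏ i : Fin (r - 1), MvPolynomial.X i ^ ((i : ℕ) + 1)) *
        ∏ i : Fin (r - 1), ∏ j ∈ Finset.Ioi i,
          (MvPolynomial.X i - MvPolynomial.X j)) : R)
    = MvPolynomial.coeff
      (Finsupp.equivFunOnFinite.symm fun _ : Fin (r - 2) => r - 2)
      ((∏ i : Fin (r - 2), MvPolynomial.X i ^ ((i : ℕ) + 1)) *
        ∏ i : Fin (r - 2), ∏ j ∈ Finset.Ioi i,
          (MvPolynomial.X i - MvPolynomial.X j)) := by
  rw [coeff_staircase_mul_prod_sub_X, coeff_staircase_mul_prod_sub_X]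

/-- The induction step in the "useful particular case" (equation (2.2)): the coefficient
of `∏_{i=1}^{r-1} t_i^{r-1}` in `(∏_{i=1}^{r-1} t_i^i) ⬝ ∏_{1≤i<j≤r-1}(t_i - t_j)` equals
the coefficient of `∏_{i=1}^{r-2} t_i^{r-2}` in
`(∏_{i=1}^{r-2} t_i^i) ⬝ ∏_{1≤i<j≤r-2}(t_i - t_j)`. -/
theorem stmt_11 {R : Type*} [CommRing R] (r : ℕ) (hr : 3 ≤ r) :
    (MvPolynomial.coeff
      (Finsupp.equivFunOnFinite.symm fun _ : Fin (r - 1) => r - 1)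
      ((∏ i : Fin (r - 1), MvPolynomial.X i ^ ((i : ℕ) + 1)) *
        ∏ i : Fin (r - 1), ∏ j ∈ Finset.Ioi i,
          (MvPolynomial.X i - MvPolynomial.X j)) : R)
    = MvPolynomial.coeff
      (Finsupp.equivFunOnFinite.symm fun _ : Fin (r - 2) => r - 2)
      ((∏ i : Fin (r - 2), MvPolynomial.X i ^ ((i : ℕ) + 1)) *
        ∏ i : Fin (r - 2), ∏ j ∈ Finset.Ioi i,
          (MvPolynomial.X i - MvPolynomial.X j)) :=
  stmt_11_general r
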